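/- Let (!, δ, ε, ∂) be a Cartesian differential comonad on a category X with finite biproducts, and equip the coKleisli category with the differential combinator D[f] := f ∘ ∂_A for coKleisli maps f : !(A) → B. Then a coKleisli map f : !(A) → B is D-linear in the coKleisli category if and only if f ∘ ∂_A ∘ !(ι₁) = f, where ι₁ = ⟨0, 1_A⟩ : A → A × A. -/

import Mathlib

/-!
Self-contained formalization of Cartesian left additive categories (CLAC),
following Blute–Cockett–Seely / Ikonicoff–Lemay.
-/

universe u v

structure CLAC where
  Obj : Type u
  Hom : Obj → Obj → Type v
  id : (A : Obj) → Hom A A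
  comp : {A B C : Obj} → Hom B C → Hom A B → Hom A C
  id_comp : ∀ {A B : Obj} (f : Hom A B), comp (id B) f = f
  comp_id : ∀ {A B : Obj} (f : Hom A B), comp f (id A) = f
  comp_assoc : ∀ {A B C D : Obj} (h : Hom C D) (g : Hom B C) (f : Hom A B),
    comp (comp h g) f = comp h (comp g f)
  top : Obj
  toTop : (A : Obj) → Hom A top
  toTop_unique : ∀ {A : Obj} (f : Hom A top), f = toTop A
  prod : Obj → Obj → Obj
  p0 : {A B : Obj} → Hom (prod A B) A
  p1 : {A B : Obj} → Hom (prod A B) B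
  pair : {C A B : Obj} → Hom C A → Hom C B → Hom C (prod A B)
  p0_pair : ∀ {C A B : Obj} (f : Hom C A) (g : Hom C B), comp p0 (pair f g) = f
  p1_pair : ∀ {C A B : Obj} (f : Hom C A) (g : Hom C B), comp p1 (pair f g) = g
  pair_unique : ∀ {C A B : Obj} (h : Hom C (prod A B)), pair (comp p0 h) (comp p1 h) = h
  add : {A B : Obj} → Hom A B → Hom A B → Hom A B
  zero : {A B : Obj} → Hom A B
  add_comm' : ∀ {A B : Obj} (f g : Hom A B), add f g = add g f
  add_assoc' : ∀ {A B : Obj} (f g h : Hom A B), add (add f g) h = add f (add g h)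
  add_zero' : ∀ {A B : Obj} (f : Hom A B), add f zero = f
  comp_add : ∀ {A' A B : Obj} (f g : Hom A B) (x : Hom A' A),
    comp (add f g) x = add (comp f x) (comp g x)
  comp_zero : ∀ {A' A B : Obj} (x : Hom A' A), comp (zero : Hom A B) x = zero
  p0_additive : ∀ {A' A B : Obj} (x y : Hom A' (prod A B)),
    comp p0 (add x y) = add (comp p0 x) (comp p0 y)
  p0_zero : ∀ {A' A B : Obj},
    comp (p0 : Hom (prod A B) A) (zero : Hom A' (prod A B)) = zero
  p1_additive : ∀ {A' A B : Obj} (x y : Hom A' (prod A B)),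
    comp p1 (add x y) = add (comp p1 x) (comp p1 y)
  p1_zero : ∀ {A' A B : Obj},
    comp (p1 : Hom (prod A B) B) (zero : Hom A' (prod A B)) = zero

namespace CLAC

variable (C : CLAC.{u, v})

/-- The injection `ι₀ := ⟨1, 0⟩ : A → A × B`. -/
def i0 {A B : C.Obj} : C.Hom A (C.prod A B) := C.pair (C.id A) C.zero

/-- The injection `ι₁ := ⟨0, 1⟩ : B → A × B`. -/
def i1 {A B : C.Obj} : C.Hom B (C.prod A B) := C.pair C.zero (C.id B)

/-- The product of maps `f × g`. -/
def pmap {A B A' B' : C.Obj} (f : C.Hom A A') (g : C.Hom B B') :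
    C.Hom (C.prod A B) (C.prod A' B') :=
  C.pair (C.comp f C.p0) (C.comp g C.p1)

/-- The sum map `∇ := π₀ + π₁`. -/
def nabla (A : C.Obj) : C.Hom (C.prod A A) A := C.add C.p0 C.p1

/-- The lifting map `ℓ := ι₀ × ι₁`. -/
def lmap (A : C.Obj) : C.Hom (C.prod A A) (C.prod (C.prod A A) (C.prod A A)) :=
  C.pmap C.i0 C.i1

/-- The interchange map `c := ⟨π₀ × π₀, π₁ × π₁⟩`. -/
def cmap (A : C.Obj) :
    C.Hom (C.prod (C.prod A A) (C.prod A A)) (C.prod (C.prod A A) (C.prod A A)) :=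
  C.pair (C.pmap C.p0 C.p0) (C.pmap C.p1 C.p1)

/-- A map is additive when postcomposition preserves sums and zeros. -/
def Additive {A B : C.Obj} (f : C.Hom A B) : Prop :=
  (∀ {A' : C.Obj} (x y : C.Hom A' A),
      C.comp f (C.add x y) = C.add (C.comp f x) (C.comp f y)) ∧
  (∀ {A' : C.Obj}, C.comp f (C.zero : C.Hom A' A) = C.zero)

end CLAC

/-- The axioms [CD.1]–[CD.7] of a differential combinator on a Cartesian left
additive category. -/
structure IsDiffComb (C : CLAC.{u, v})
    (D : {A B : C.Obj} → C.Hom A B → C.Hom (C.prod A A) B) : Prop where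
  cd1_add : ∀ {A B : C.Obj} (f g : C.Hom A B), D (C.add f g) = C.add (D f) (D g)
  cd1_zero : ∀ {A B : C.Obj}, D (C.zero : C.Hom A B) = C.zero
  cd2_add : ∀ {A B : C.Obj} (f : C.Hom A B),
    C.comp (D f) (C.pmap (C.id A) (C.nabla A)) =
      C.add (C.comp (D f) (C.pmap (C.id A) C.p0)) (C.comp (D f) (C.pmap (C.id A) C.p1))
  cd2_zero : ∀ {A B : C.Obj} (f : C.Hom A B), C.comp (D f) C.i0 = C.zero
  cd3_id : ∀ {A : C.Obj}, D (C.id A) = C.p1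
  cd3_p0 : ∀ {A B : C.Obj}, D (C.p0 : C.Hom (C.prod A B) A) = C.comp C.p0 C.p1
  cd3_p1 : ∀ {A B : C.Obj}, D (C.p1 : C.Hom (C.prod A B) B) = C.comp C.p1 C.p1
  cd4 : ∀ {X A B : C.Obj} (f : C.Hom X A) (g : C.Hom X B),
    D (C.pair f g) = C.pair (D f) (D g)
  cd5 : ∀ {A B B' : C.Obj} (g : C.Hom B B') (f : C.Hom A B),
    D (C.comp g f) = C.comp (D g) (C.pair (C.comp f C.p0) (D f))
  cd6 : ∀ {A B : C.Obj} (f : C.Hom A B), C.comp (D (D f)) (C.lmap A) = D f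
  cd7 : ∀ {A B : C.Obj} (f : C.Hom A B), C.comp (D (D f)) (C.cmap A) = D (D f)

/-- The data of a comonad `(!, δ, ε)` on `C`. -/
structure ComonadData (C : CLAC.{u, v}) where
  obj : C.Obj → C.Obj
  map : {A B : C.Obj} → C.Hom A B → C.Hom (obj A) (obj B)
  δ : (A : C.Obj) → C.Hom (obj A) (obj (obj A))
  ε : (A : C.Obj) → C.Hom (obj A) A

/-- The comonad laws: functoriality, naturality of `δ` and `ε`, coassociativity
and the counit laws. -/
structure IsComonad (C : CLAC.{u, v}) (T : ComonadData C) : Prop where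
  map_id : ∀ (A : C.Obj), T.map (C.id A) = C.id (T.obj A)
  map_comp : ∀ {A B B' : C.Obj} (g : C.Hom B B') (f : C.Hom A B),
    T.map (C.comp g f) = C.comp (T.map g) (T.map f)
  δ_nat : ∀ {A B : C.Obj} (f : C.Hom A B),
    C.comp (T.map (T.map f)) (T.δ A) = C.comp (T.δ B) (T.map f)
  ε_nat : ∀ {A B : C.Obj} (f : C.Hom A B),
    C.comp f (T.ε A) = C.comp (T.ε B) (T.map f)
  coassoc : ∀ (A : C.Obj),
    C.comp (T.δ (T.obj A)) (T.δ A) = C.comp (T.map (T.δ A)) (T.δ A)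
  counit_left : ∀ (A : C.Obj), C.comp (T.ε (T.obj A)) (T.δ A) = C.id (T.obj A)
  counit_right : ∀ (A : C.Obj), C.comp (T.map (T.ε A)) (T.δ A) = C.id (T.obj A)

/-- The axioms [dc.1]–[dc.6] for a differential combinator transformation
`∂_A : !(A × A) → !(A)` on a comonad. -/
structure IsDCT (C : CLAC.{u, v}) (T : ComonadData C)
    (pd : (A : C.Obj) → C.Hom (T.obj (C.prod A A)) (T.obj A)) : Prop where
  nat : ∀ {A B : C.Obj} (f : C.Hom A B),
    C.comp (pd B) (T.map (C.pmap f f)) = C.comp (T.map f) (pd A)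
  dc1 : ∀ (A : C.Obj), C.comp (pd A) (T.map C.i0) = C.zero
  dc2 : ∀ (A : C.Obj),
    C.comp (pd A) (T.map (C.pmap (C.id A) (C.nabla A))) =
      C.comp (pd A)
        (C.add (T.map (C.pmap (C.id A) C.p0)) (T.map (C.pmap (C.id A) C.p1)))
  dc3 : ∀ (A : C.Obj),
    C.comp (T.ε A) (pd A) = C.comp C.p1 (T.ε (C.prod A A))
  dc4 : ∀ (A : C.Obj),
    C.comp (T.δ A) (pd A) =
      C.comp (pd (T.obj A))
        (C.comp (T.map (C.pair (T.map C.p0) (pd A))) (T.δ (C.prod A A)))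
  dc5 : ∀ (A : C.Obj),
    C.comp (pd A) (C.comp (pd (C.prod A A)) (T.map (C.lmap A))) = pd A
  dc6 : ∀ (A : C.Obj),
    C.comp (pd A) (C.comp (pd (C.prod A A)) (T.map (C.cmap A))) =
      C.comp (pd A) (pd (C.prod A A))

/-- A D-linear unit `η_A : A → !(A)` for a Cartesian differential comonad:
a natural transformation satisfying [du.1] `ε ∘ η = 1` and
[du.2] `∂ ∘ !(ι₁) = η ∘ ε`. -/
structure IsDLinUnit (C : CLAC.{u, v}) (T : ComonadData C)
    (pd : (A : C.Obj) → C.Hom (T.obj (C.prod A A)) (T.obj A))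
    (η : (A : C.Obj) → C.Hom A (T.obj A)) : Prop where
  nat : ∀ {A B : C.Obj} (f : C.Hom A B),
    C.comp (η B) f = C.comp (T.map f) (η A)
  du1 : ∀ (A : C.Obj), C.comp (T.ε A) (η A) = C.id A
  du2 : ∀ (A : C.Obj),
    C.comp (pd A) (T.map C.i1) = C.comp (η A) (T.ε A)

/-!
The linearization `L := ∂ ∘ !(ι₁)` (in coKleisli terms, `f ↦ D[f](0, -)`) is itself
D-linear: `L ∘ ∂ = L ∘ ∂ ∘ !(ι₁ ∘ π₁)`. By naturality of `∂` and [dc.6],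
`L ∘ ∂ = ∂ ∘ ∂ ∘ !(ι₁)`; splitting `(0, (a, b)) = (0, (a, 0)) + (0, (0, b))` with [dc.2],
the first summand factors through `!(c ∘ ι₀)` and vanishes by [dc.6] and [dc.1].
Hence `f = f ∘ L` gives `f ∘ ∂ = f ∘ L ∘ ∂ = f ∘ L ∘ ∂ ∘ !(ι₁ ∘ π₁) = f ∘ !(π₁)`;
the converse is `π₁ ∘ ι₁ = 1`.
-/

local infixr:80 " ⊚ " => CLAC.comp _

attribute [local simp] CLAC.comp_assoc CLAC.id_comp CLAC.comp_id CLAC.p0_pair CLAC.p1_pair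
  CLAC.comp_zero CLAC.p0_zero CLAC.p1_zero CLAC.p0_additive CLAC.p1_additive CLAC.comp_add
  CLAC.add_zero'

namespace CLAC

variable {C : CLAC.{u, v}}

theorem pair_ext {X A B : C.Obj} {f g : C.Hom X (C.prod A B)}
    (h0 : C.p0 ⊚ f = C.p0 ⊚ g) (h1 : C.p1 ⊚ f = C.p1 ⊚ g) : f = g := by
  rw [← C.pair_unique f, ← C.pair_unique g, h0, h1]

@[simp] theorem pair_comp {X Y A B : C.Obj} (f : C.Hom Y A) (g : C.Hom Y B) (x : C.Hom X Y) :
    C.pair f g ⊚ x = C.pair (f ⊚ x) (g ⊚ x) :=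
  pair_ext (by rw [← C.comp_assoc]; simp) (by rw [← C.comp_assoc]; simp)

@[simp] theorem zero_add {A B : C.Obj} (f : C.Hom A B) : C.add C.zero f = f := by
  rw [C.add_comm', C.add_zero']

theorem p1_comp_i1 {A B : C.Obj} : C.p1 ⊚ C.i1 (A := A) (B := B) = C.id B := by
  simp [i1]

end CLAC

theorem IsComonad.map_comp_ε_comp_δ {C : CLAC.{u, v}} {T : ComonadData C} (hT : IsComonad C T)
    {A B : C.Obj} (g : C.Hom A B) : T.map (g ⊚ T.ε A) ⊚ T.δ A = T.map g := by
  rw [hT.map_comp, C.comp_assoc, hT.counit_right, C.comp_id]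

namespace IsDCT

variable {C : CLAC.{u, v}} {T : ComonadData C}
  {pd : (A : C.Obj) → C.Hom (T.obj (C.prod A A)) (T.obj A)}

theorem pd_map_pair_add (hT : IsComonad C T) (hpd : IsDCT C T pd) {B : C.Obj}
    (hadd : C.Additive (pd B)) {X : C.Obj} (u v w : C.Hom X B) :
    pd B ⊚ T.map (C.pair u (C.add v w)) =
      C.add (pd B ⊚ T.map (C.pair u v)) (pd B ⊚ T.map (C.pair u w)) := by
  have hsplit : C.pair u (C.add v w) =
      C.pmap (C.id B) (C.nabla B) ⊚ C.pair u (C.pair v w) :=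
    CLAC.pair_ext (by simp [CLAC.pmap]) (by simp [CLAC.pmap, CLAC.nabla])
  have hdc2 := congrArg (· ⊚ T.map (C.pair u (C.pair v w))) (hpd.dc2 B)
  simp only [C.comp_assoc, C.comp_add, ← hT.map_comp] at hdc2
  rw [hsplit, hdc2, hadd.1]
  simp [CLAC.pmap]

theorem pd_pd_map_cmap_comp (hT : IsComonad C T) (hpd : IsDCT C T pd) {A X : C.Obj}
    (g : C.Hom X (C.prod (C.prod A A) (C.prod A A))) :
    pd A ⊚ pd (C.prod A A) ⊚ T.map (C.cmap A ⊚ g) = pd A ⊚ pd (C.prod A A) ⊚ T.map g := by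
  simpa only [C.comp_assoc, ← hT.map_comp] using congrArg (· ⊚ T.map g) (hpd.dc6 A)

theorem pd_pd_map_pair_zero_pair_zero (hT : IsComonad C T) (hpd : IsDCT C T pd) {A X : C.Obj}
    (hadd : C.Additive (pd A)) (h : C.Hom X A) :
    pd A ⊚ pd (C.prod A A) ⊚ T.map (C.pair C.zero (C.pair h C.zero)) = C.zero := by
  have hc : C.pair C.zero (C.pair h C.zero) = C.cmap A ⊚ C.i0 ⊚ C.pair C.zero h := by
    refine CLAC.pair_ext (CLAC.pair_ext ?_ ?_) (CLAC.pair_ext ?_ ?_) <;>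
      simp [CLAC.cmap, CLAC.pmap, CLAC.i0]
  rw [hc, hpd.pd_pd_map_cmap_comp hT, hT.map_comp, ← C.comp_assoc (pd (C.prod A A)), hpd.dc1,
    C.comp_zero, hadd.2]

theorem pd_pd_map_i1 (hT : IsComonad C T) (hpd : IsDCT C T pd)
    (hadd : ∀ B : C.Obj, C.Additive (pd B)) {A : C.Obj} :
    pd A ⊚ pd (C.prod A A) ⊚ T.map C.i1 =
      pd A ⊚ pd (C.prod A A) ⊚ T.map (C.pair C.zero (C.pair C.zero C.p1)) := by
  have hsplit : C.i1 (A := C.prod A A) (B := C.prod A A) =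
      C.pair C.zero (C.add (C.pair C.p0 C.zero) (C.pair C.zero C.p1)) := by
    refine CLAC.pair_ext ?_ (CLAC.pair_ext ?_ ?_) <;> simp [CLAC.i1]
  rw [hsplit, hpd.pd_map_pair_add hT (hadd _), (hadd A).1,
    hpd.pd_pd_map_pair_zero_pair_zero hT (hadd A), CLAC.zero_add]

theorem pd_map_i1_pd (hT : IsComonad C T) (hpd : IsDCT C T pd) {A : C.Obj} :
    pd A ⊚ T.map C.i1 ⊚ pd A = pd A ⊚ pd (C.prod A A) ⊚ T.map C.i1 := by
  have hc : C.pmap C.i1 C.i1 = C.cmap A ⊚ C.i1 := by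
    refine CLAC.pair_ext (CLAC.pair_ext ?_ ?_) (CLAC.pair_ext ?_ ?_) <;>
      simp [CLAC.cmap, CLAC.pmap, CLAC.i1]
  rw [← hpd.nat, hc, hpd.pd_pd_map_cmap_comp hT]

theorem linearization_comp_pd (hT : IsComonad C T) (hpd : IsDCT C T pd)
    (hadd : ∀ B : C.Obj, C.Additive (pd B)) {A : C.Obj} :
    pd A ⊚ T.map C.i1 ⊚ pd A = pd A ⊚ T.map C.i1 ⊚ pd A ⊚ T.map (C.i1 ⊚ C.p1) := by
  have hc : C.pmap (C.i1 : C.Hom A (C.prod A A)) C.i1 ⊚ C.i1 ⊚ C.p1 =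
      (C.pair C.zero (C.pair C.zero C.p1) :
        C.Hom (C.prod A A) (C.prod (C.prod A A) (C.prod A A))) := by
    refine CLAC.pair_ext (CLAC.pair_ext ?_ ?_) (CLAC.pair_ext ?_ ?_) <;>
      simp [CLAC.pmap, CLAC.i1]
  rw [hpd.pd_map_i1_pd hT, hpd.pd_pd_map_i1 hT hadd, ← hc, hT.map_comp, hT.map_comp,
    ← C.comp_assoc (T.map C.i1), ← hpd.nat]
  simp only [C.comp_assoc]

end IsDCT

/-- For a Cartesian differential comonad `(!, δ, ε, ∂)` on a
category with finite biproducts, equip the coKleisli category with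
`D[f] := f ∘ ∂_A`.  A coKleisli map `f : !(A) → B` is D-linear in the coKleisli
category (i.e. `D[f]` equals the coKleisli composite of `f` with the coKleisli
second projection `π₁ ∘ ε`) if and only if `f ∘ ∂_A ∘ !(ι₁) = f`. -/
theorem statement12 (C : CLAC.{u, v})
    (hbiprod : ∀ {A B : C.Obj} (f : C.Hom A B), C.Additive f)
    (T : ComonadData C) (hT : IsComonad C T)
    (pd : (A : C.Obj) → C.Hom (T.obj (C.prod A A)) (T.obj A))
    (hpd : IsDCT C T pd) {A B : C.Obj} (f : C.Hom (T.obj A) B) :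
    (C.comp f (pd A) =
        C.comp f
          (C.comp (T.map (C.comp C.p1 (T.ε (C.prod A A)))) (T.δ (C.prod A A)))) ↔
      C.comp f (C.comp (pd A) (T.map C.i1)) = f := by
  rw [hT.map_comp_ε_comp_δ]
  constructor
  · intro hlin
    rw [← C.comp_assoc, hlin, C.comp_assoc, ← hT.map_comp, CLAC.p1_comp_i1, hT.map_id,
      C.comp_id]
  · intro hf
    have hf' : ∀ {Z : C.Obj} (g : C.Hom Z (T.obj A)), f ⊚ pd A ⊚ T.map C.i1 ⊚ g = f ⊚ g :=
      fun g => by simpa only [C.comp_assoc] using congrArg (· ⊚ g) hf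
    calc f ⊚ pd A
        = f ⊚ pd A ⊚ T.map C.i1 ⊚ pd A := (hf' _).symm
      _ = f ⊚ pd A ⊚ T.map C.i1 ⊚ pd A ⊚ T.map (C.i1 ⊚ C.p1) := by
        rw [hpd.linearization_comp_pd hT fun B => hbiprod (pd B)]
      _ = f ⊚ pd A ⊚ T.map C.i1 ⊚ T.map C.p1 := by rw [hf', hT.map_comp]
      _ = f ⊚ T.map C.p1 := hf' _
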